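/- arXiv:2003.05619 — 3 statements merged into one kernel-verified Lean document; each statement's English description precedes it below -/
import Mathlib

section
/- Let f ∈ L²(0,1) have Fourier expansion f(x) = Σ_{j∈ℤ} θ_j e^{2πijx} with θ₀ = 0, and let m be a positive integer. Then Σ_{l=0}^{m−1} (∫_{l/m}^{(l+1)/m} f(x) dx)² = m · Σ_{k∈ℤ} Σ_{j ≠ km, j≠0, j−km≠0} [θ_j · conj(θ_{j−km}) / (4π² j (j−km))] · (2 − 2cos(2πj/m)). -/
open Real MeasureTheory

/-!
Integrating the Fourier series term by term, the integral of `f` over the `l`-th cell is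
`∑ j, A j * ζ ^ (j * l)` with `ζ = exp (2πi/m)` and `A j = θ j (ζ ^ j - 1) / (2πij)`
(`cellCoeff θ m j`). Summing the squared moduli over `l`, orthogonality of the characters
`l ↦ ζ ^ ((j - j') * l)` of `ℤ/mℤ` keeps exactly the pairs with `j' = j - k * m`. Finally
`ζ ^ (j - k * m) = ζ ^ j` and `|ζ ^ j - 1| ^ 2 = 2 - 2 cos (2πj/m)` turn
`A j * conj (A (j - k * m))` into the summand on the right.
-/

open ComplexConjugate Finset

theorem tsum_mul_conj_mul_ite_dvd_sub {m : ℕ} (hm : m ≠ 0) {b : ℤ → ℂ}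
    (hb : Summable fun p : ℤ × ℤ => ‖b p.1 * conj (b p.2)‖) :
    ∑' p : ℤ × ℤ, b p.1 * conj (b p.2) * (if (m : ℤ) ∣ p.1 - p.2 then (m : ℂ) else 0)
      = m * ∑' k : ℤ, ∑' j : ℤ, b j * conj (b (j - k * m)) := by
  -- the pairs `(j, j')` with `j ≡ j' [ZMOD m]` are exactly the `(j, j - k * m)`
  let g : ℤ × ℤ → ℤ × ℤ := fun q => (q.2, q.2 - q.1 * m)
  have hg : Function.Injective g := fun q q' h => by
    simp only [g, Prod.mk.injEq] at h
    ext
    · exact mul_right_cancel₀ (Int.natCast_ne_zero.2 hm) (by omega)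
    · exact h.1
  have hsupp : Function.support (fun p : ℤ × ℤ =>
      b p.1 * conj (b p.2) * if (m : ℤ) ∣ p.1 - p.2 then (m : ℂ) else 0) ⊆ Set.range g := by
    intro p hp
    obtain ⟨k, hk⟩ : (m : ℤ) ∣ p.1 - p.2 := by_contra fun h => hp (by simp [h])
    exact ⟨(k, p.1), by ext <;> simp [g]; linarith⟩
  have hbg : Summable fun q : ℤ × ℤ => b q.2 * conj (b (q.2 - q.1 * m)) :=
    (hb.comp_injective hg).of_norm
  rw [← hg.tsum_eq hsupp, ← hbg.tsum_prod, ← tsum_mul_left]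
  refine tsum_congr fun q => ?_
  simp [g, mul_comm]

namespace IsPrimitiveRoot

variable {ζ : ℂ} {m : ℕ}

theorem sum_range_zpow_mul (hζ : IsPrimitiveRoot ζ m) (d : ℤ) :
    ∑ l ∈ range m, ζ ^ (d * l) = if (m : ℤ) ∣ d then (m : ℂ) else 0 := by
  simp only [zpow_mul, zpow_natCast]
  split_ifs with hd
  · simp [(hζ.zpow_eq_one_iff_dvd d).2 hd]
  · have hζd : ζ ^ d ≠ 1 := fun h => hd ((hζ.zpow_eq_one_iff_dvd d).1 h)
    rw [geom_sum_eq hζd, ← zpow_natCast, ← zpow_mul, mul_comm, zpow_mul,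
      hζ.zpow_eq_one_iff_dvd _ |>.2 dvd_rfl]
    simp

theorem zpow_mul_conj_zpow (hζ : IsPrimitiveRoot ζ m) (hm : m ≠ 0) (a b : ℤ) :
    ζ ^ a * conj (ζ ^ b) = ζ ^ (a - b) := by
  rw [map_zpow₀, ← Complex.inv_eq_conj (hζ.norm'_eq_one hm), inv_zpow',
    ← zpow_add₀ (hζ.ne_zero hm), sub_eq_add_neg]

theorem norm_mul_zpow (hζ : IsPrimitiveRoot ζ m) (hm : m ≠ 0) (z : ℂ) (n : ℤ) :
    ‖z * ζ ^ n‖ = ‖z‖ := by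
  rw [norm_mul, norm_zpow, hζ.norm'_eq_one hm, one_zpow, mul_one]

theorem norm_tsum_mul_zpow_sq (hζ : IsPrimitiveRoot ζ m) (hm : m ≠ 0) {b : ℤ → ℂ}
    (hb : Summable fun j => ‖b j‖) (n : ℤ) :
    ((‖∑' j, b j * ζ ^ (j * n)‖ ^ 2 : ℝ) : ℂ)
      = ∑' p : ℤ × ℤ, b p.1 * conj (b p.2) * ζ ^ ((p.1 - p.2) * n) := by
  have hbn : Summable fun j => ‖b j * ζ ^ (j * n)‖ := by
    simpa only [hζ.norm_mul_zpow hm] using hb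
  rw [Complex.ofReal_pow, ← Complex.mul_conj', ← Complex.star_def, tsum_star,
    tsum_mul_tsum_of_summable_norm hbn (by simpa only [Complex.star_def, RCLike.norm_conj])]
  refine tsum_congr fun p => ?_
  rw [Complex.star_def, map_mul, mul_mul_mul_comm, hζ.zpow_mul_conj_zpow hm, sub_mul]

theorem sum_range_norm_tsum_mul_zpow_sq (hζ : IsPrimitiveRoot ζ m) {b : ℤ → ℂ}
    (hb : Summable fun j => ‖b j‖) :
    ((∑ l ∈ range m, ‖∑' j, b j * ζ ^ (j * l)‖ ^ 2 : ℝ) : ℂ)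
      = m * ∑' k : ℤ, ∑' j : ℤ, b j * conj (b (j - k * m)) := by
  rcases eq_or_ne m 0 with rfl | hm
  · simp
  have hc : Summable fun p : ℤ × ℤ => ‖b p.1 * conj (b p.2)‖ :=
    hb.mul_norm (g := fun j => conj (b j)) (by simpa only [RCLike.norm_conj] using hb)
  calc ((∑ l ∈ range m, ‖∑' j, b j * ζ ^ (j * l)‖ ^ 2 : ℝ) : ℂ)
      = ∑' p : ℤ × ℤ, ∑ l ∈ range m, b p.1 * conj (b p.2) * ζ ^ ((p.1 - p.2) * l) := by
        simp only [Complex.ofReal_sum, hζ.norm_tsum_mul_zpow_sq hm hb]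
        exact (Summable.tsum_finsetSum fun l _ =>
          hc.of_norm_bounded fun p => (hζ.norm_mul_zpow hm _ _).le).symm
    _ = ∑' p : ℤ × ℤ, b p.1 * conj (b p.2) * if (m : ℤ) ∣ p.1 - p.2 then (m : ℂ) else 0 := by
        simp only [← mul_sum, hζ.sum_range_zpow_mul]
    _ = m * ∑' k : ℤ, ∑' j : ℤ, b j * conj (b (j - k * m)) := tsum_mul_conj_mul_ite_dvd_sub hm hc

end IsPrimitiveRoot

/-- At `j = 0` the division by zero makes this `0`, which is correct only because `θ 0 = 0`. -/
noncomputable def cellCoeff (θ : ℤ → ℂ) (m : ℕ) (j : ℤ) : ℂ :=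
  θ j * (Complex.exp (2 * π * Complex.I / m) ^ j - 1) / (2 * π * Complex.I * j)

theorem norm_exp_two_pi_I_div_natCast (m : ℕ) : ‖Complex.exp (2 * π * Complex.I / m)‖ = 1 := by
  rw [Complex.norm_exp]
  simp

theorem norm_exp_two_pi_I_mul_intCast_mul (j : ℤ) (x : ℝ) :
    ‖Complex.exp (2 * π * Complex.I * j * x)‖ = 1 := by
  rw [Complex.norm_exp]
  simp

theorem exp_two_pi_I_mul_intCast_mul_div (m : ℕ) (hm : m ≠ 0) (j : ℤ) (n : ℕ) :
    Complex.exp (2 * π * Complex.I * j * ((n : ℝ) / m : ℝ))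
      = Complex.exp (2 * π * Complex.I / m) ^ (j * n) := by
  rw [← Complex.exp_int_mul]
  congr 1
  push_cast
  field_simp

theorem norm_cellCoeff_le (θ : ℤ → ℂ) (m : ℕ) (j : ℤ) : ‖cellCoeff θ m j‖ ≤ ‖θ j‖ := by
  rcases eq_or_ne j 0 with rfl | hj
  · simp [cellCoeff]
  have hnum : ‖Complex.exp (2 * π * Complex.I / m) ^ j - 1‖ ≤ 2 := by
    refine (norm_sub_le _ _).trans ?_
    rw [norm_zpow, norm_exp_two_pi_I_div_natCast, one_zpow, norm_one]
    norm_num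
  have hden : 2 ≤ ‖2 * π * Complex.I * j‖ := by
    have : (1 : ℝ) ≤ |(j : ℝ)| := by exact_mod_cast Int.one_le_abs hj
    simp only [norm_mul, Complex.norm_ofNat, Complex.norm_real, Real.norm_eq_abs,
      abs_of_pos pi_pos, Complex.norm_I, mul_one, Complex.norm_intCast]
    nlinarith [pi_gt_three]
  rw [cellCoeff, norm_div, norm_mul, div_le_iff₀ (by linarith)]
  nlinarith [norm_nonneg (θ j)]

theorem integral_cell_mul_exp (θ : ℤ → ℂ) (hθ0 : θ 0 = 0) (m : ℕ) (hm : m ≠ 0) (l : ℕ) (j : ℤ) :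
    ∫ x in ((l : ℝ) / m)..(((l : ℝ) + 1) / m), θ j * Complex.exp (2 * π * Complex.I * j * x)
      = cellCoeff θ m j * Complex.exp (2 * π * Complex.I / m) ^ (j * l) := by
  rcases eq_or_ne j 0 with rfl | hj
  · simp [hθ0, cellCoeff]
  have hc : 2 * π * Complex.I * j ≠ 0 := by simp [pi_ne_zero, hj]
  have hsucc := exp_two_pi_I_mul_intCast_mul_div m hm j (l + 1)
  rw [intervalIntegral.integral_const_mul, integral_exp_mul_complex hc,
    exp_two_pi_I_mul_intCast_mul_div m hm, ← Nat.cast_succ, hsucc, Nat.cast_succ, mul_add_one,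
    zpow_add₀ (Complex.exp_ne_zero _), cellCoeff]
  ring

theorem integral_cell_eq_tsum (θ : ℤ → ℂ) (hθ0 : θ 0 = 0) (hθ1 : Summable fun j => ‖θ j‖)
    (m : ℕ) (hm : m ≠ 0) (f : ℝ → ℂ)
    (hf : ∀ x : ℝ, f x = ∑' j : ℤ, θ j * Complex.exp (2 * π * Complex.I * j * x)) (l : ℕ) :
    ∫ x in ((l : ℝ) / m)..(((l : ℝ) + 1) / m), f x
      = ∑' j : ℤ, cellCoeff θ m j * Complex.exp (2 * π * Complex.I / m) ^ (j * l) := by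
  have hle : (l : ℝ) / m ≤ ((l : ℝ) + 1) / m := by gcongr; linarith
  simp only [hf, intervalIntegral.integral_of_le hle]
  rw [← integral_tsum_of_summable_integral_norm]
  · refine tsum_congr fun j => ?_
    rw [← intervalIntegral.integral_of_le hle, integral_cell_mul_exp θ hθ0 m hm]
  · exact fun j => (by fun_prop : Continuous _).integrableOn_Ioc
  · simpa only [norm_mul, norm_exp_two_pi_I_mul_intCast_mul, mul_one, integral_const, smul_eq_mul]
      using hθ1.mul_left _

theorem exp_mul_I_sub_one_mul_conj (t : ℝ) :
    (Complex.exp (t * Complex.I) - 1) * conj (Complex.exp (t * Complex.I) - 1)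
      = 2 - 2 * Real.cos t := by
  rw [map_sub, ← Complex.exp_conj, map_mul, Complex.conj_ofReal, Complex.conj_I, map_one,
    mul_neg, ← neg_mul, Complex.exp_mul_I, Complex.exp_mul_I, Complex.cos_neg, Complex.sin_neg,
    ← Complex.ofReal_cos, ← Complex.ofReal_sin]
  have hsc : (Real.sin t : ℂ) ^ 2 + (Real.cos t : ℂ) ^ 2 = 1 := by
    exact_mod_cast Real.sin_sq_add_cos_sq t
  linear_combination (-(Real.sin t : ℂ) ^ 2) * Complex.I_sq + hsc

theorem cellCoeff_mul_conj_cellCoeff_sub (θ : ℤ → ℂ) (hθ0 : θ 0 = 0) (m : ℕ) (hm : m ≠ 0)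
    (k j : ℤ) :
    cellCoeff θ m j * conj (cellCoeff θ m (j - k * m)) =
      if j ≠ 0 ∧ j ≠ k * m then
        θ j * conj (θ (j - k * m)) / (4 * π ^ 2 * j * (j - k * m))
          * (2 - 2 * Real.cos (2 * π * j / m))
      else 0 := by
  by_cases hj : j = 0
  · simp [cellCoeff, hj, hθ0]
  by_cases hjk : j = k * m
  · simp [cellCoeff, hjk, hθ0]
  rw [if_pos ⟨hj, hjk⟩]
  have hζ := Complex.isPrimitiveRoot_exp m hm
  have hper : Complex.exp (2 * π * Complex.I / m) ^ (j - k * m)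
      = Complex.exp (2 * π * Complex.I / m) ^ j := by
    rw [zpow_sub₀ (hζ.ne_zero hm), mul_comm k, zpow_mul, zpow_natCast, hζ.pow_eq_one, one_zpow,
      div_one]
  have hζj : Complex.exp (2 * π * Complex.I / m) ^ j
      = Complex.exp ((2 * π * j / m : ℝ) * Complex.I) := by
    rw [← Complex.exp_int_mul]
    congr 1
    push_cast
    ring
  have hsub : ((j - k * m : ℤ) : ℂ) = j - k * m := by push_cast; ring
  rw [cellCoeff, cellCoeff, hper, hζj]
  simp only [map_div₀, map_mul, Complex.conj_ofReal, Complex.conj_I, map_ofNat, map_intCast]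
  rw [hsub, ← exp_mul_I_sub_one_mul_conj, div_mul_div_comm]
  generalize Complex.exp ((2 * π * j / m : ℝ) * Complex.I) - 1 = E
  have hden : 2 * π * Complex.I * j * (2 * π * -Complex.I * (j - k * m))
      = 4 * π ^ 2 * j * (j - k * m) := by
    linear_combination (-4 * π ^ 2 * j * (j - k * m) : ℂ) * Complex.I_sq
  rw [hden]
  ring

theorem stmt7_general (θ : ℤ → ℂ) (hθ0 : θ 0 = 0)
    (hθ1 : Summable fun j => ‖θ j‖)
    (m : ℕ) (hm : 1 ≤ m)
    (f : ℝ → ℂ)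
    (hf : ∀ x : ℝ, f x = ∑' j : ℤ, θ j * Complex.exp (2 * π * Complex.I * j * x)) :
    (↑(∑ l ∈ Finset.range m, ‖∫ x in ((l : ℝ) / m)..(((l : ℝ) + 1) / m), f x‖ ^ 2) : ℂ)
      = (m : ℂ) * ∑' k : ℤ, ∑' j : ℤ,
          if j ≠ 0 ∧ j ≠ k * m then
            θ j * (starRingEnd ℂ) (θ (j - k * m)) / (4 * π ^ 2 * j * (j - k * m))
              * (2 - 2 * Real.cos (2 * π * j / m))
          else 0 := by
  have hm0 : m ≠ 0 := by omega
  have hcoeff : Summable fun j => ‖cellCoeff θ m j‖ :=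
    hθ1.of_nonneg_of_le (fun _ => norm_nonneg _) (norm_cellCoeff_le θ m)
  simp only [integral_cell_eq_tsum θ hθ0 hθ1 m hm0 f hf,
    (Complex.isPrimitiveRoot_exp m hm0).sum_range_norm_tsum_mul_zpow_sq hcoeff,
    cellCoeff_mul_conj_cellCoeff_sub θ hθ0 m hm0]

theorem stmt7 (θ : ℤ → ℂ) (hθ0 : θ 0 = 0)
    (hθ1 : Summable fun j => ‖θ j‖) (hθ2 : Summable fun j : ℤ => ‖θ j‖ ^ 2)
    (m : ℕ) (hm : 1 ≤ m)
    (f : ℝ → ℂ)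
    (hf : ∀ x : ℝ, f x = ∑' j : ℤ, θ j * Complex.exp (2 * π * Complex.I * j * x)) :
    (↑(∑ l ∈ Finset.range m, ‖∫ x in ((l : ℝ) / m)..(((l : ℝ) + 1) / m), f x‖ ^ 2) : ℂ)
      = (m : ℂ) * ∑' k : ℤ, ∑' j : ℤ,
          if j ≠ 0 ∧ j ≠ k * m then
            θ j * (starRingEnd ℂ) (θ (j - k * m)) / (4 * π ^ 2 * j * (j - k * m))
              * (2 - 2 * Real.cos (2 * π * j / m))
          else 0 :=
  stmt7_general θ hθ0 hθ1 m hm f hf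
end

section
/- Let b be a Brownian bridge on [0,1] and F a continuous distribution function on [0,1]. Define T²(g) = ∫₀¹ g(t)² dt. Then E[|T²(b∘F) − T²(b)|] ≤ C · (∫₀¹ (F(t) − t)² dt)^{1/8} for an absolute constant C. -/
/-! With `X = b ∘ F` and `Y = b` viewed as functions on `Ω × (0,1]`, the difference
`T²(X) - T²(Y)` is `∫ (X - Y)(X + Y) dt`, so by Fubini and Cauchy–Schwarz its mean absolute
value is at most `‖X - Y‖₂ ‖X + Y‖₂`. The bridge covariance gives
`E (b s - b t)² = |s - t| - (s - t)²` and `E (b s + b t)² ≤ 1`, hence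
`‖X - Y‖₂² ≤ ∫ |F t - t| dt ≤ ‖F - id‖₂` and `‖X + Y‖₂ ≤ 1`. This yields the bound
`‖F - id‖₂^(1/2) = D^(1/4)` with `D = ∫ (F t - t)²`, and `D ≤ 1` turns it into `D^(1/8)`. -/

open Real MeasureTheory ProbabilityTheory

section SecondMoments

variable {α : Type*} [MeasurableSpace α] {μ : Measure α} {f g : α → ℝ}

theorem integral_abs_mul_le_sqrt_mul_sqrt (hf : MemLp f 2 μ) (hg : MemLp g 2 μ) :
    ∫ a, |f a * g a| ∂μ ≤ √(∫ a, f a ^ 2 ∂μ) * √(∫ a, g a ^ 2 ∂μ) := by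
  have h := integral_mul_norm_le_Lp_mul_Lq (p := 2) (q := 2) HolderConjugate.two_two
    (by simpa using hf) (by simpa using hg)
  simpa [abs_mul, sqrt_eq_rpow] using h

theorem integral_abs_le_sqrt_integral_sq [IsProbabilityMeasure μ] (hf : MemLp f 2 μ) :
    ∫ a, |f a| ∂μ ≤ √(∫ a, f a ^ 2 ∂μ) := by
  simpa using integral_abs_mul_le_sqrt_mul_sqrt hf (memLp_const (1 : ℝ))

theorem integral_sub_sq_eq (hf : MemLp f 2 μ) (hg : MemLp g 2 μ) :
    ∫ a, (f a - g a) ^ 2 ∂μ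
      = ∫ a, f a * f a ∂μ + ∫ a, g a * g a ∂μ - 2 * ∫ a, f a * g a ∂μ := by
  have hff : Integrable (fun a => f a * f a) μ := hf.integrable_mul hf
  have hgg : Integrable (fun a => g a * g a) μ := hg.integrable_mul hg
  have hfg : Integrable (fun a => f a * g a) μ := hf.integrable_mul hg
  have hsum : Integrable (fun a => f a * f a + g a * g a) μ := hff.add hgg
  calc ∫ a, (f a - g a) ^ 2 ∂μ = ∫ a, (f a * f a + g a * g a) - 2 * (f a * g a) ∂μ := by
        congr 1 with a; ring
    _ = _ := by
        rw [integral_sub hsum (hfg.const_mul 2), integral_add hff hgg, integral_const_mul]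

theorem integral_add_sq_eq (hf : MemLp f 2 μ) (hg : MemLp g 2 μ) :
    ∫ a, (f a + g a) ^ 2 ∂μ
      = ∫ a, f a * f a ∂μ + ∫ a, g a * g a ∂μ + 2 * ∫ a, f a * g a ∂μ := by
  have hff : Integrable (fun a => f a * f a) μ := hf.integrable_mul hf
  have hgg : Integrable (fun a => g a * g a) μ := hg.integrable_mul hg
  have hfg : Integrable (fun a => f a * g a) μ := hf.integrable_mul hg
  have hsum : Integrable (fun a => f a * f a + g a * g a) μ := hff.add hgg
  calc ∫ a, (f a + g a) ^ 2 ∂μ = ∫ a, (f a * f a + g a * g a) + 2 * (f a * g a) ∂μ := by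
        congr 1 with a; ring
    _ = _ := by
        rw [integral_add hsum (hfg.const_mul 2), integral_add hff hgg, integral_const_mul]

end SecondMoments

section ProductSpace

variable {α β : Type*} [MeasurableSpace α] [MeasurableSpace β] {μ : Measure α} {ν : Measure β}
  [SFinite μ] [SFinite ν]

theorem MeasureTheory.MemLp.ae_memLp_two_prodMk_right {f : α × β → ℝ}
    (hf : MemLp f 2 (μ.prod ν)) : ∀ᵐ y ∂ν, MemLp (fun x => f (x, y)) 2 μ := by
  filter_upwards [hf.1.prodMk_right, hf.integrable_sq.prod_left_ae] with y hmeas hsq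
  exact (memLp_two_iff_integrable_sq hmeas).2 hsq

theorem integral_abs_sub_integral_sq_le {f g : α × β → ℝ}
    (hf : MemLp f 2 (μ.prod ν)) (hg : MemLp g 2 (μ.prod ν)) :
    ∫ x, |∫ y, f (x, y) ^ 2 ∂ν - ∫ y, g (x, y) ^ 2 ∂ν| ∂μ
      ≤ √(∫ z, (f z - g z) ^ 2 ∂(μ.prod ν)) * √(∫ z, (f z + g z) ^ 2 ∂(μ.prod ν)) := by
  have hprod : Integrable (fun z => |(f z - g z) * (f z + g z)|) (μ.prod ν) :=
    ((hf.sub hg).integrable_mul (hf.add hg)).abs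
  calc ∫ x, |∫ y, f (x, y) ^ 2 ∂ν - ∫ y, g (x, y) ^ 2 ∂ν| ∂μ
      ≤ ∫ x, ∫ y, |(f (x, y) - g (x, y)) * (f (x, y) + g (x, y))| ∂ν ∂μ := by
        refine integral_mono_of_nonneg (ae_of_all _ fun x => abs_nonneg _)
          hprod.integral_prod_left ?_
        filter_upwards [hf.integrable_sq.prod_right_ae, hg.integrable_sq.prod_right_ae]
          with x hfx hgx
        rw [← integral_sub hfx hgx]
        refine abs_integral_le_integral_abs.trans_eq ?_
        congr 1 with y
        ring_nf
    _ = ∫ z, |(f z - g z) * (f z + g z)| ∂(μ.prod ν) := (integral_prod _ hprod).symm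
    _ ≤ _ := integral_abs_mul_le_sqrt_mul_sqrt (hf.sub hg) (hf.add hg)

end ProductSpace

def HasBridgeCovariance {Ω : Type*} [MeasurableSpace Ω] (P : Measure Ω) (b : ℝ → Ω → ℝ) :
    Prop :=
  ∀ s ∈ Set.Icc (0 : ℝ) 1, ∀ t ∈ Set.Icc (0 : ℝ) 1, ∫ ω, b s ω * b t ω ∂P = min s t - s * t

namespace HasBridgeCovariance

variable {Ω : Type*} [MeasurableSpace Ω] {P : Measure Ω} {b : ℝ → Ω → ℝ}

theorem integral_sub_sq_eq (hcov : HasBridgeCovariance P b) {s t : ℝ}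
    (hs : s ∈ Set.Icc (0 : ℝ) 1) (ht : t ∈ Set.Icc (0 : ℝ) 1)
    (hbs : MemLp (b s) 2 P) (hbt : MemLp (b t) 2 P) :
    ∫ ω, (b s ω - b t ω) ^ 2 ∂P = |s - t| - (s - t) ^ 2 := by
  rw [_root_.integral_sub_sq_eq hbs hbt, hcov s hs s hs, hcov t ht t ht, hcov s hs t ht,
    min_self, min_self]
  rcases le_total s t with h | h
  · rw [min_eq_left h, abs_of_nonpos (sub_nonpos.2 h)]; ring
  · rw [min_eq_right h, abs_of_nonneg (sub_nonneg.2 h)]; ring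

theorem integral_add_sq_le_one (hcov : HasBridgeCovariance P b) {s t : ℝ}
    (hs : s ∈ Set.Icc (0 : ℝ) 1) (ht : t ∈ Set.Icc (0 : ℝ) 1)
    (hbs : MemLp (b s) 2 P) (hbt : MemLp (b t) 2 P) :
    ∫ ω, (b s ω + b t ω) ^ 2 ∂P ≤ 1 := by
  rw [_root_.integral_add_sq_eq hbs hbt, hcov s hs s hs, hcov t ht t ht, hcov s hs t ht,
    min_self, min_self]
  rcases le_total s t with h | h
  · rw [min_eq_left h]; nlinarith [sq_nonneg (s + t - 1)]
  · rw [min_eq_right h]; nlinarith [sq_nonneg (s + t - 1)]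

variable [SFinite P] {ν : Measure ℝ} [SFinite ν] {F : ℝ → ℝ}

theorem integral_prod_sub_sq_eq (hcov : HasBridgeCovariance P b)
    (hν : ∀ᵐ t ∂ν, t ∈ Set.Icc (0 : ℝ) 1)
    (hF : ∀ t ∈ Set.Icc (0 : ℝ) 1, F t ∈ Set.Icc (0 : ℝ) 1)
    (hX : MemLp (fun p : Ω × ℝ => b (F p.2) p.1) 2 (P.prod ν))
    (hY : MemLp (fun p : Ω × ℝ => b p.2 p.1) 2 (P.prod ν)) :
    ∫ p, (b (F p.2) p.1 - b p.2 p.1) ^ 2 ∂(P.prod ν)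
      = ∫ t, (|F t - t| - (F t - t) ^ 2) ∂ν := by
  have hsq : Integrable (fun p : Ω × ℝ => (b (F p.2) p.1 - b p.2 p.1) ^ 2) (P.prod ν) :=
    (hX.sub hY).integrable_sq
  rw [integral_prod_symm _ hsq]
  refine integral_congr_ae ?_
  filter_upwards [hν, hX.ae_memLp_two_prodMk_right, hY.ae_memLp_two_prodMk_right]
    with t ht hbF hb
  exact hcov.integral_sub_sq_eq (hF t ht) ht hbF hb

theorem integral_prod_add_sq_le_one [IsProbabilityMeasure ν] (hcov : HasBridgeCovariance P b)
    (hν : ∀ᵐ t ∂ν, t ∈ Set.Icc (0 : ℝ) 1)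
    (hF : ∀ t ∈ Set.Icc (0 : ℝ) 1, F t ∈ Set.Icc (0 : ℝ) 1)
    (hX : MemLp (fun p : Ω × ℝ => b (F p.2) p.1) 2 (P.prod ν))
    (hY : MemLp (fun p : Ω × ℝ => b p.2 p.1) 2 (P.prod ν)) :
    ∫ p, (b (F p.2) p.1 + b p.2 p.1) ^ 2 ∂(P.prod ν) ≤ 1 := by
  have hsq : Integrable (fun p : Ω × ℝ => (b (F p.2) p.1 + b p.2 p.1) ^ 2) (P.prod ν) :=
    (hX.add hY).integrable_sq
  rw [integral_prod_symm _ hsq]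
  calc ∫ t, ∫ ω, (b (F t) ω + b t ω) ^ 2 ∂P ∂ν ≤ ∫ _, (1 : ℝ) ∂ν := by
        refine integral_mono_ae hsq.integral_prod_right (integrable_const 1) ?_
        filter_upwards [hν, hX.ae_memLp_two_prodMk_right, hY.ae_memLp_two_prodMk_right]
          with t ht hbF hb
        exact hcov.integral_add_sq_le_one (hF t ht) ht hbF hb
    _ = 1 := by simp

end HasBridgeCovariance

section TimeChange

variable {ν : Measure ℝ} {F : ℝ → ℝ}

theorem ae_abs_sub_le_one (hν : ∀ᵐ t ∂ν, t ∈ Set.Icc (0 : ℝ) 1)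
    (hF : ∀ t ∈ Set.Icc (0 : ℝ) 1, F t ∈ Set.Icc (0 : ℝ) 1) :
    ∀ᵐ t ∂ν, |F t - t| ≤ 1 := by
  filter_upwards [hν] with t ht
  have hFt := hF t ht
  exact abs_le.2 ⟨by linarith [ht.2, hFt.1], by linarith [ht.1, hFt.2]⟩

variable [IsProbabilityMeasure ν]

theorem integral_sub_sq_le_one (hν : ∀ᵐ t ∂ν, t ∈ Set.Icc (0 : ℝ) 1)
    (hF : ∀ t ∈ Set.Icc (0 : ℝ) 1, F t ∈ Set.Icc (0 : ℝ) 1) :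
    ∫ t, (F t - t) ^ 2 ∂ν ≤ 1 := by
  calc ∫ t, (F t - t) ^ 2 ∂ν ≤ ∫ _, (1 : ℝ) ∂ν :=
        integral_mono_of_nonneg (ae_of_all _ fun _ => sq_nonneg _) (integrable_const 1)
          ((ae_abs_sub_le_one hν hF).mono fun _ ht => (sq_le_one_iff_abs_le_one _).2 ht)
    _ = 1 := by simp

theorem integral_abs_sub_sub_sq_le_sqrt (hν : ∀ᵐ t ∂ν, t ∈ Set.Icc (0 : ℝ) 1)
    (hF : ∀ t ∈ Set.Icc (0 : ℝ) 1, F t ∈ Set.Icc (0 : ℝ) 1) (hFm : AEMeasurable F ν) :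
    ∫ t, (|F t - t| - (F t - t) ^ 2) ∂ν ≤ √(∫ t, (F t - t) ^ 2 ∂ν) := by
  have hdev : MemLp (fun t => F t - t) 2 ν :=
    .of_bound (hFm.sub aemeasurable_id).aestronglyMeasurable 1 (ae_abs_sub_le_one hν hF)
  have habs : Integrable (fun t => |F t - t|) ν := (hdev.integrable one_le_two).abs
  calc ∫ t, (|F t - t| - (F t - t) ^ 2) ∂ν ≤ ∫ t, |F t - t| ∂ν :=
        integral_mono (habs.sub hdev.integrable_sq) habs fun _ => sub_le_self _ (sq_nonneg _)
    _ ≤ √(∫ t, (F t - t) ^ 2 ∂ν) := integral_abs_le_sqrt_integral_sq hdev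

end TimeChange

theorem stmt12_general {Ω : Type*} [MeasurableSpace Ω] (P : Measure Ω) [IsProbabilityMeasure P]
    (b : ℝ → Ω → ℝ) (hmeas : Measurable (Function.uncurry b))
    (hcov : ∀ s ∈ Set.Icc (0 : ℝ) 1, ∀ t ∈ Set.Icc (0 : ℝ) 1,
      ∫ ω, b s ω * b t ω ∂P = min s t - s * t)
    (hsqint : Integrable (fun p : Ω × ℝ => (b p.2 p.1) ^ 2)
      (P.prod (volume.restrict (Set.Ioc 0 1)))) :
    ∃ C : ℝ, 0 < C ∧
      ∀ F : ℝ → ℝ, MonotoneOn F (Set.Icc 0 1) → ContinuousOn F (Set.Icc 0 1) →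
        F 0 = 0 → F 1 = 1 → (∀ t ∈ Set.Icc (0 : ℝ) 1, F t ∈ Set.Icc (0 : ℝ) 1) →
        Integrable (fun p : Ω × ℝ => (b (F p.2) p.1) ^ 2)
          (P.prod (volume.restrict (Set.Ioc 0 1))) →
        Integrable (fun ω => |(∫ t in Set.Ioc (0 : ℝ) 1, (b (F t) ω) ^ 2)
          - ∫ t in Set.Ioc (0 : ℝ) 1, (b t ω) ^ 2|) P →
        (∫ ω, |(∫ t in Set.Ioc (0 : ℝ) 1, (b (F t) ω) ^ 2)
            - ∫ t in Set.Ioc (0 : ℝ) 1, (b t ω) ^ 2| ∂P)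
          ≤ C * (∫ t in Set.Ioc (0 : ℝ) 1, (F t - t) ^ 2) ^ ((1 : ℝ) / 8) := by
  refine ⟨1, one_pos, fun F _ hFcont _ _ hF hFint _ => ?_⟩
  set ν : Measure ℝ := volume.restrict (Set.Ioc 0 1)
  have : IsProbabilityMeasure ν := ⟨by simp [ν]⟩
  have hν : ∀ᵐ t ∂ν, t ∈ Set.Icc (0 : ℝ) 1 :=
    (ae_restrict_mem measurableSet_Ioc).mono fun _ ht => Set.Ioc_subset_Icc_self ht
  have hFm : AEMeasurable F ν :=
    (hFcont.mono Set.Ioc_subset_Icc_self).aemeasurable measurableSet_Ioc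
  have hX : MemLp (fun p : Ω × ℝ => b (F p.2) p.1) 2 (P.prod ν) :=
    (memLp_two_iff_integrable_sq (hmeas.comp_aemeasurable
      ((hFm.comp_quasiMeasurePreserving Measure.quasiMeasurePreserving_snd).prodMk
        measurable_fst.aemeasurable)).aestronglyMeasurable).2 hFint
  have hY : MemLp (fun p : Ω × ℝ => b p.2 p.1) 2 (P.prod ν) :=
    (memLp_two_iff_integrable_sq (hmeas.comp measurable_swap).aestronglyMeasurable).2 hsqint
  set D := ∫ t, (F t - t) ^ 2 ∂ν
  have hD0 : 0 ≤ D := integral_nonneg fun t => sq_nonneg _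
  calc _ ≤ √(∫ p, (b (F p.2) p.1 - b p.2 p.1) ^ 2 ∂(P.prod ν))
        * √(∫ p, (b (F p.2) p.1 + b p.2 p.1) ^ 2 ∂(P.prod ν)) :=
        integral_abs_sub_integral_sq_le hX hY
    _ ≤ √(√D) * 1 := by
        rw [HasBridgeCovariance.integral_prod_sub_sq_eq hcov hν hF hX hY]
        gcongr
        · exact integral_abs_sub_sub_sq_le_sqrt hν hF hFm
        · exact sqrt_le_one.2 (HasBridgeCovariance.integral_prod_add_sq_le_one hcov hν hF hX hY)
    _ = D ^ ((1 : ℝ) / 4) := by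
        rw [mul_one, sqrt_eq_rpow, sqrt_eq_rpow, ← rpow_mul hD0]; norm_num
    _ ≤ 1 * D ^ ((1 : ℝ) / 8) := by
        rw [one_mul]
        exact rpow_le_rpow_of_exponent_ge' hD0 (integral_sub_sq_le_one hν hF) (by norm_num)
          (by norm_num)

theorem stmt12 {Ω : Type*} [MeasurableSpace Ω] (P : Measure Ω) [IsProbabilityMeasure P]
    (b : ℝ → Ω → ℝ) (hmeas : Measurable (Function.uncurry b))
    (hmean : ∀ t ∈ Set.Icc (0 : ℝ) 1, ∫ ω, b t ω ∂P = 0)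
    (hcov : ∀ s ∈ Set.Icc (0 : ℝ) 1, ∀ t ∈ Set.Icc (0 : ℝ) 1,
      ∫ ω, b s ω * b t ω ∂P = min s t - s * t)
    (hsqint : Integrable (fun p : Ω × ℝ => (b p.2 p.1) ^ 2)
      (P.prod (volume.restrict (Set.Ioc 0 1)))) :
    ∃ C : ℝ, 0 < C ∧
      ∀ F : ℝ → ℝ, MonotoneOn F (Set.Icc 0 1) → ContinuousOn F (Set.Icc 0 1) →
        F 0 = 0 → F 1 = 1 → (∀ t ∈ Set.Icc (0 : ℝ) 1, F t ∈ Set.Icc (0 : ℝ) 1) →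
        Integrable (fun p : Ω × ℝ => (b (F p.2) p.1) ^ 2)
          (P.prod (volume.restrict (Set.Ioc 0 1))) →
        Integrable (fun ω => |(∫ t in Set.Ioc (0 : ℝ) 1, (b (F t) ω) ^ 2)
          - ∫ t in Set.Ioc (0 : ℝ) 1, (b t ω) ^ 2|) P →
        (∫ ω, |(∫ t in Set.Ioc (0 : ℝ) 1, (b (F t) ω) ^ 2)
            - ∫ t in Set.Ioc (0 : ℝ) 1, (b t ω) ^ 2| ∂P)
          ≤ C * (∫ t in Set.Ioc (0 : ℝ) 1, (F t - t) ^ 2) ^ ((1 : ℝ) / 8) :=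
  stmt12_general P b hmeas hcov hsqint
end

section
/- Let ξ₁, ξ₂ be independent standard Gaussian random variables, and let a, b ∈ ℝ and x > 0. Then P((ξ₁+a)² + ¼(ξ₂+b)² ≤ x), viewed as a function of x, has a density that is bounded above by a constant depending only on an upper bound C for |a| and |b| (uniformly over |a| ≤ C, |b| ≤ C, x > 0). -/
open Real MeasureTheory ProbabilityTheory
open scoped NNReal ENNReal

/-!
The joint density of `(ξ₁, ξ₂)` is bounded by `1 / (2π)`, and the ellipse
`(u + a)² + (v + b)² / 4 ≤ r` has area `2πr` whatever the centre `(a, b)`. Hence the shell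
between the levels `x` and `y` has probability at most `y - x`, so `M = 1` works for every `C`.
-/

lemma gaussianPDFReal_le (m : ℝ) (v : ℝ≥0) (x : ℝ) :
    gaussianPDFReal m v x ≤ (√(2 * π * v))⁻¹ := by
  rw [gaussianPDFReal_def]
  refine mul_le_of_le_one_right (by positivity) (exp_le_one_iff.2 ?_)
  exact div_nonpos_of_nonpos_of_nonneg (neg_nonpos.2 (sq_nonneg _)) (by positivity)

lemma gaussianReal_le_smul_volume (m : ℝ) {v : ℝ≥0} (hv : v ≠ 0) :
    gaussianReal m v ≤ ENNReal.ofReal (√(2 * π * v))⁻¹ • volume := by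
  rw [gaussianReal_of_var_ne_zero m hv, ← withDensity_const]
  exact withDensity_mono
    (.of_forall fun x ↦ ENNReal.ofReal_le_ofReal (gaussianPDFReal_le m v x))

lemma gaussianReal_prod_le_smul_volume (m₁ m₂ : ℝ) :
    (gaussianReal m₁ 1).prod (gaussianReal m₂ 1) ≤ ENNReal.ofReal (2 * π)⁻¹ • volume := by
  have hsq : ENNReal.ofReal (√(2 * π))⁻¹ * ENNReal.ofReal (√(2 * π))⁻¹
      = ENNReal.ofReal (2 * π)⁻¹ := by
    rw [← ENNReal.ofReal_mul (by positivity), ← mul_inv, mul_self_sqrt (by positivity)]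
  calc (gaussianReal m₁ 1).prod (gaussianReal m₂ 1)
      ≤ (ENNReal.ofReal (√(2 * π))⁻¹ • volume).prod
          (ENNReal.ofReal (√(2 * π))⁻¹ • (volume : Measure ℝ)) := by
        gcongr <;> simpa using gaussianReal_le_smul_volume _ one_ne_zero
    _ = ENNReal.ofReal (2 * π)⁻¹ • volume := by
        rw [Measure.prod_smul_left, Measure.prod_smul_right, smul_smul, hsq,
          Measure.volume_eq_prod]

lemma volume_setOf_sq_add_sq_le {r : ℝ} (hr : 0 ≤ r) :
    volume {p : ℝ × ℝ | p.1 ^ 2 + p.2 ^ 2 ≤ r} = ENNReal.ofReal (π * r) := by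
  have hdisc : Complex.measurableEquivRealProd ⁻¹' {p : ℝ × ℝ | p.1 ^ 2 + p.2 ^ 2 ≤ r}
      = Metric.closedBall 0 √r := by
    ext z
    simp only [Set.mem_preimage, Complex.measurableEquivRealProd_apply, Set.mem_ofPred_eq,
      Metric.mem_closedBall, dist_zero_right, Real.le_sqrt (norm_nonneg z) hr, Complex.sq_norm,
      Complex.normSq_apply, ← sq]
  rw [← Complex.volume_preserving_equiv_real_prod.measure_preimage
    (measurableSet_le (by fun_prop) (by fun_prop)).nullMeasurableSet, hdisc,
    Complex.volume_closedBall, ← ENNReal.ofReal_pow (sqrt_nonneg _), sq_sqrt hr,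
    ← ENNReal.ofReal_coe_nnreal, NNReal.coe_real_pi, ← ENNReal.ofReal_mul hr, mul_comm]

lemma volume_setOf_ellipse_le (a b : ℝ) {c r : ℝ} (hc : 0 < c) (hr : 0 ≤ r) :
    volume {p : ℝ × ℝ | (p.1 + a) ^ 2 + c ^ 2 * (p.2 + b) ^ 2 ≤ r}
      = ENNReal.ofReal (π * r / c) := by
  have hscale : Measurable (Prod.map id (c * ·) : ℝ × ℝ → ℝ × ℝ) :=
    measurable_id.prodMap (measurable_const_mul c)
  have hdisc : MeasurableSet {p : ℝ × ℝ | p.1 ^ 2 + p.2 ^ 2 ≤ r} :=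
    measurableSet_le (by fun_prop) (by fun_prop)
  have hset : {p : ℝ × ℝ | (p.1 + a) ^ 2 + c ^ 2 * (p.2 + b) ^ 2 ≤ r}
      = (· + (a, b)) ⁻¹' (Prod.map id (c * ·) ⁻¹' {p : ℝ × ℝ | p.1 ^ 2 + p.2 ^ 2 ≤ r}) := by
    ext p
    simp [mul_pow]
  rw [hset, measure_preimage_add_right, Measure.volume_eq_prod,
    ← Measure.map_apply hscale hdisc,
    ← Measure.map_prod_map _ _ measurable_id (measurable_const_mul c), Measure.map_id,
    Real.map_volume_mul_left hc.ne', Measure.prod_smul_right, Measure.smul_apply,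
    ← Measure.volume_eq_prod, volume_setOf_sq_add_sq_le hr, smul_eq_mul,
    ← ENNReal.ofReal_mul (by positivity), abs_of_pos (inv_pos.2 hc), inv_mul_eq_div]

lemma measureReal_ellipse_sub_le {μ : Measure (ℝ × ℝ)} [IsFiniteMeasure μ] {K : ℝ}
    (hK : 0 ≤ K) (hμ : μ ≤ ENNReal.ofReal K • volume) (a b : ℝ) {c x y : ℝ} (hc : 0 < c)
    (hx : 0 ≤ x) (hxy : x ≤ y) :
    μ.real {p | (p.1 + a) ^ 2 + c ^ 2 * (p.2 + b) ^ 2 ≤ y}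
        - μ.real {p | (p.1 + a) ^ 2 + c ^ 2 * (p.2 + b) ^ 2 ≤ x}
      ≤ K * (π * (y - x) / c) := by
  set S : ℝ → Set (ℝ × ℝ) := fun r ↦ {p | (p.1 + a) ^ 2 + c ^ 2 * (p.2 + b) ^ 2 ≤ r}
  have hSx : MeasurableSet (S x) := measurableSet_le (by fun_prop) (by fun_prop)
  have hS : ∀ r, 0 ≤ r → volume (S r) = ENNReal.ofReal (π * r / c) :=
    fun r hr ↦ volume_setOf_ellipse_le a b hc hr
  have hshell : volume (S y \ S x) = ENNReal.ofReal (π * (y - x) / c) := by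
    have hsub : S x ⊆ S y := fun p (hp : _ ≤ x) ↦ hp.trans hxy
    rw [measure_sdiff hsub hSx.nullMeasurableSet (by simp [hS x hx]), hS y (hx.trans hxy),
      hS x hx, ← ENNReal.ofReal_sub _ (by positivity), mul_sub, sub_div]
  calc μ.real (S y) - μ.real (S x) ≤ μ.real (S y \ S x) := le_measureReal_sdiff
    _ ≤ K * (π * (y - x) / c) := by
      refine ENNReal.toReal_le_of_le_ofReal (by have := sub_nonneg.2 hxy; positivity) ?_
      calc μ (S y \ S x) ≤ ENNReal.ofReal K * volume (S y \ S x) := hμ _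
        _ = ENNReal.ofReal (K * (π * (y - x) / c)) := by
          rw [hshell, ENNReal.ofReal_mul hK]

theorem stmt15_general {Ω : Type*} [MeasurableSpace Ω] (P : Measure Ω) [IsProbabilityMeasure P]
    (ξ₁ ξ₂ : Ω → ℝ) (h1 : Measurable ξ₁) (h2 : Measurable ξ₂)
    (hlaw1 : P.map ξ₁ = gaussianReal 0 1) (hlaw2 : P.map ξ₂ = gaussianReal 0 1)
    (hindep : IndepFun ξ₁ ξ₂ P) (C : ℝ) :
    ∃ M : ℝ, 0 < M ∧ ∀ a b : ℝ, |a| ≤ C → |b| ≤ C → ∀ x y : ℝ, 0 ≤ x → x ≤ y →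
      (P {ω | (ξ₁ ω + a) ^ 2 + (1 / 4) * (ξ₂ ω + b) ^ 2 ≤ y}).toReal
        - (P {ω | (ξ₁ ω + a) ^ 2 + (1 / 4) * (ξ₂ ω + b) ^ 2 ≤ x}).toReal
        ≤ M * (y - x) := by
  refine ⟨1, one_pos, fun a b _ _ x y hx hxy ↦ ?_⟩
  have hlaw : P.map (fun ω ↦ (ξ₁ ω, ξ₂ ω)) = (gaussianReal 0 1).prod (gaussianReal 0 1) := by
    rw [(indepFun_iff_map_prod_eq_prod_map_map h1.aemeasurable h2.aemeasurable).1 hindep,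
      hlaw1, hlaw2]
  have hP : ∀ z, (P {ω | (ξ₁ ω + a) ^ 2 + (1 / 4) * (ξ₂ ω + b) ^ 2 ≤ z}).toReal
      = ((gaussianReal 0 1).prod (gaussianReal 0 1)).real
          {p | (p.1 + a) ^ 2 + (1 / 2) ^ 2 * (p.2 + b) ^ 2 ≤ z} := by
    intro z
    rw [← hlaw, measureReal_def, Measure.map_apply (h1.prodMk h2)
      (measurableSet_le (by fun_prop) (by fun_prop))]
    norm_num
  rw [hP, hP]
  convert measureReal_ellipse_sub_le (by positivity) (gaussianReal_prod_le_smul_volume 0 0) a b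
    one_half_pos hx hxy using 1
  field_simp

theorem stmt15 {Ω : Type*} [MeasurableSpace Ω] (P : Measure Ω) [IsProbabilityMeasure P]
    (ξ₁ ξ₂ : Ω → ℝ) (h1 : Measurable ξ₁) (h2 : Measurable ξ₂)
    (hlaw1 : P.map ξ₁ = gaussianReal 0 1) (hlaw2 : P.map ξ₂ = gaussianReal 0 1)
    (hindep : IndepFun ξ₁ ξ₂ P) (C : ℝ) (hC : 0 < C) :
    ∃ M : ℝ, 0 < M ∧ ∀ a b : ℝ, |a| ≤ C → |b| ≤ C → ∀ x y : ℝ, 0 ≤ x → x ≤ y →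
      (P {ω | (ξ₁ ω + a) ^ 2 + (1 / 4) * (ξ₂ ω + b) ^ 2 ≤ y}).toReal
        - (P {ω | (ξ₁ ω + a) ^ 2 + (1 / 4) * (ξ₂ ω + b) ^ 2 ≤ x}).toReal
        ≤ M * (y - x) :=
  stmt15_general P ξ₁ ξ₂ h1 h2 hlaw1 hlaw2 hindep C
end
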